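/- Every MWSR flow is a ratio-balanced maximum flow: if a feasible flow f minimizes ∑_{j∈A} e_j (r_j^f)² among all feasible flows, then f is a maximum flow and satisfies the ratio constraint. -/

import Mathlib

/-!
Along the segment from `f` to a feasible `g` the objective is a quadratic in the step size, so
minimality of `f` gives the first-order condition `∑ⱼ r_j^f (G_j - F_j) ≤ 0`, where `F` and `G`
are the inflows of the accounts under `f` and `g`. Testing it on flows that differ from `f` on
one or two edges shows that a security never feeds an account of lower risk ratio than one of its
other accounts (the ratio constraint), and that a security with spare value has only saturated
accounts. Hence the saturated accounts, together with the securities adjacent to an unsaturated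
account, form a cut whose capacity `f` attains, so `f` is a maximum flow.
-/

open Finset
open scoped Classical

variable {S A : Type*} [Fintype S] [Fintype A]

/-- A feasible flow: nonnegative on edges, zero off edges, outflow of each security
bounded by its value, inflow of each account bounded by its exposure. -/
def Feasible (E : Finset (S × A)) (v : S → ℝ) (e : A → ℝ) (f : S → A → ℝ) : Prop :=
  (∀ i j, (i, j) ∈ E → 0 ≤ f i j) ∧
  (∀ i j, (i, j) ∉ E → f i j = 0) ∧
  (∀ i : S, ∑ j ∈ Finset.univ.filter (fun j => (i, j) ∈ E), f i j ≤ v i) ∧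
  (∀ j : A, ∑ i ∈ Finset.univ.filter (fun i => (i, j) ∈ E), f i j ≤ e j)

/-- The value of a flow: total flow on all edges. -/
noncomputable def flowValue (E : Finset (S × A)) (f : S → A → ℝ) : ℝ :=
  ∑ p ∈ E, f p.1 p.2

/-- The risk ratio of account `j` under a flow `f`. -/
noncomputable def riskRatio (E : Finset (S × A)) (e : A → ℝ) (f : S → A → ℝ) (j : A) : ℝ :=
  (e j - ∑ i ∈ Finset.univ.filter (fun i => (i, j) ∈ E), f i j) / e j

/-- A maximum flow: feasible, with value maximal among feasible flows. -/
def IsMaxFlow (E : Finset (S × A)) (v : S → ℝ) (e : A → ℝ) (f : S → A → ℝ) : Prop :=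
  Feasible E v e f ∧ ∀ g : S → A → ℝ, Feasible E v e g → flowValue E g ≤ flowValue E f

/-- The ratio constraint: if `f` sends positive flow from `i` to `j` and `i` could
also be used for `l`, then the risk ratio of `j` is at least that of `l`. -/
def RatioConstraint (E : Finset (S × A)) (e : A → ℝ) (f : S → A → ℝ) : Prop :=
  ∀ i j l, (i, j) ∈ E → 0 < f i j → (i, l) ∈ E →
    riskRatio E e f l ≤ riskRatio E e f j

/-- A ratio-balanced (maximum) flow. -/
def RatioBalanced (E : Finset (S × A)) (v : S → ℝ) (e : A → ℝ) (f : S → A → ℝ) : Prop :=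
  IsMaxFlow E v e f ∧ RatioConstraint E e f

/-- The weighted sum of squared risk ratios `∑ j, e j * (r_j^f)^2`. -/
noncomputable def objective (E : Finset (S × A)) (e : A → ℝ) (f : S → A → ℝ) : ℝ :=
  ∑ j : A, e j * (riskRatio E e f j) ^ 2

/-- An MWSR flow: a feasible flow minimizing the weighted sum of squared risk
ratios among all feasible flows. -/
def MWSR (E : Finset (S × A)) (v : S → ℝ) (e : A → ℝ) (f : S → A → ℝ) : Prop :=
  Feasible E v e f ∧ ∀ g : S → A → ℝ, Feasible E v e g → objective E e f ≤ objective E e g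

set_option linter.unusedSectionVars false

theorem nonpos_of_forall_two_mul_mul_le_sq_mul {a Q : ℝ} (hQ : 0 ≤ Q)
    (h : ∀ t ∈ Set.Ioc (0 : ℝ) 1, 2 * t * a ≤ t ^ 2 * Q) : a ≤ 0 := by
  by_contra! ha
  have haQ : 0 < a + Q := by linarith
  have ht : a / (a + Q) ∈ Set.Ioc (0 : ℝ) 1 :=
    ⟨div_pos ha haQ, (div_le_one haQ).2 (by linarith)⟩
  have hdiv : 2 * a ≤ a / (a + Q) * Q :=
    le_of_mul_le_mul_left (by linarith [h _ ht]) ht.1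
  have hsmall : a / (a + Q) * Q ≤ a := by
    rw [div_mul_eq_mul_div, div_le_iff₀ haQ]
    nlinarith
  linarith

noncomputable def inflow (E : Finset (S × A)) (f : S → A → ℝ) (j : A) : ℝ :=
  ∑ i ∈ univ.filter (fun i => (i, j) ∈ E), f i j

noncomputable def outflow (E : Finset (S × A)) (f : S → A → ℝ) (i : S) : ℝ :=
  ∑ j ∈ univ.filter (fun j => (i, j) ∈ E), f i j

noncomputable def edgeFlow (i : S) (j : A) (δ : ℝ) : S → A → ℝ :=
  Pi.single i (Pi.single j δ)

variable {E : Finset (S × A)} {v : S → ℝ} {e : A → ℝ} {f : S → A → ℝ}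

@[simp]
theorem inflow_add (f g : S → A → ℝ) (j : A) :
    inflow E (f + g) j = inflow E f j + inflow E g j :=
  sum_add_distrib

@[simp]
theorem inflow_sub (f g : S → A → ℝ) (j : A) :
    inflow E (f - g) j = inflow E f j - inflow E g j :=
  sum_sub_distrib ..

@[simp]
theorem inflow_smul (c : ℝ) (f : S → A → ℝ) (j : A) :
    inflow E (c • f) j = c * inflow E f j :=
  (mul_sum ..).symm

@[simp]
theorem outflow_add (f g : S → A → ℝ) (i : S) :
    outflow E (f + g) i = outflow E f i + outflow E g i :=
  sum_add_distrib

@[simp]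
theorem outflow_smul (c : ℝ) (f : S → A → ℝ) (i : S) :
    outflow E (c • f) i = c * outflow E f i :=
  (mul_sum ..).symm

theorem edgeFlow_apply (i : S) (j : A) (δ : ℝ) (a : S) (b : A) :
    edgeFlow i j δ a b = if a = i ∧ b = j then δ else 0 := by
  by_cases ha : a = i <;> by_cases hb : b = j <;> simp [edgeFlow, ha, hb]

theorem inflow_edgeFlow {i : S} {j : A} (hij : (i, j) ∈ E) (δ : ℝ) (l : A) :
    inflow E (edgeFlow i j δ) l = if l = j then δ else 0 := by
  by_cases hl : l = j
  · subst hl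
    simp [inflow, edgeFlow_apply, hij]
  · simp [inflow, edgeFlow_apply, hl]

theorem outflow_edgeFlow {i : S} {j : A} (hij : (i, j) ∈ E) (δ : ℝ) (a : S) :
    outflow E (edgeFlow i j δ) a = if a = i then δ else 0 := by
  by_cases ha : a = i
  · subst ha
    simp [outflow, edgeFlow_apply, hij]
  · simp [outflow, edgeFlow_apply, ha]

theorem Feasible.outflow_le (hf : Feasible E v e f) (i : S) : outflow E f i ≤ v i :=
  hf.2.2.1 i

theorem Feasible.inflow_le (hf : Feasible E v e f) (j : A) : inflow E f j ≤ e j :=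
  hf.2.2.2 j

theorem convex_setOf_feasible (E : Finset (S × A)) (v : S → ℝ) (e : A → ℝ) :
    Convex ℝ {f : S → A → ℝ | Feasible E v e f} := by
  rintro f hf g hg a b ha hb hab
  refine ⟨fun i j hij => ?_, fun i j hij => ?_, fun i => ?_, fun j => ?_⟩
  · simpa using add_nonneg (mul_nonneg ha (hf.1 i j hij)) (mul_nonneg hb (hg.1 i j hij))
  · simp [hf.2.1 i j hij, hg.2.1 i j hij]
  · change outflow E (a • f + b • g) i ≤ v i
    have := add_le_add (mul_le_mul_of_nonneg_left (hf.outflow_le i) ha)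
      (mul_le_mul_of_nonneg_left (hg.outflow_le i) hb)
    simp only [outflow_add, outflow_smul]
    rwa [← add_mul, hab, one_mul] at this
  · change inflow E (a • f + b • g) j ≤ e j
    have := add_le_add (mul_le_mul_of_nonneg_left (hf.inflow_le j) ha)
      (mul_le_mul_of_nonneg_left (hg.inflow_le j) hb)
    simp only [inflow_add, inflow_smul]
    rwa [← add_mul, hab, one_mul] at this

theorem Feasible.add_edgeFlow (hf : Feasible E v e f) {i : S} {j : A} (hij : (i, j) ∈ E)
    {δ : ℝ} (hδ : -f i j ≤ δ) (hout : outflow E f i + δ ≤ v i)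
    (hin : inflow E f j + δ ≤ e j) :
    Feasible E v e (f + edgeFlow i j δ) := by
  refine ⟨fun a b hab => ?_, fun a b hab => ?_, fun a => ?_, fun b => ?_⟩
  · have := hf.1 a b hab
    simp only [Pi.add_apply, edgeFlow_apply]
    split_ifs with h
    · obtain ⟨rfl, rfl⟩ := h
      linarith
    · linarith
  · have : ¬(a = i ∧ b = j) := by rintro ⟨rfl, rfl⟩; exact hab hij
    simp [edgeFlow_apply, hf.2.1 a b hab, this]
  · change outflow E _ a ≤ v a
    rw [outflow_add, outflow_edgeFlow hij]
    split_ifs with h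
    · exact h ▸ hout
    · exact (add_zero _).trans_le (hf.outflow_le a)
  · change inflow E _ b ≤ e b
    rw [inflow_add, inflow_edgeFlow hij]
    split_ifs with h
    · exact h ▸ hin
    · exact (add_zero _).trans_le (hf.inflow_le b)

theorem sum_inflow_eq (E : Finset (S × A)) (g : S → A → ℝ) (Z : Finset A) :
    ∑ j ∈ Z, inflow E g j = ∑ p ∈ E with p.2 ∈ Z, g p.1 p.2 :=
  (sum_finset_product_right (E.filter (·.2 ∈ Z)) Z
    (fun j => univ.filter (fun i => (i, j) ∈ E)) (by simp [and_comm])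
    (f := fun p => g p.1 p.2)).symm

theorem sum_outflow_eq (E : Finset (S × A)) (g : S → A → ℝ) (X : Finset S) :
    ∑ i ∈ X, outflow E g i = ∑ p ∈ E with p.1 ∈ X, g p.1 p.2 :=
  (sum_finset_product (E.filter (·.1 ∈ X)) X
    (fun i => univ.filter (fun j => (i, j) ∈ E)) (by simp [and_comm])
    (f := fun p => g p.1 p.2)).symm

theorem flowValue_eq_of_cut {Z : Finset A} {X : Finset S}
    (hcut : ∀ i j, (i, j) ∈ E → j ∉ Z → i ∈ X) (g : S → A → ℝ) :
    flowValue E g = ∑ j ∈ Z, inflow E g j + ∑ i ∈ X, outflow E g i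
      - ∑ p ∈ E with p.1 ∈ X ∧ p.2 ∈ Z, g p.1 p.2 := by
  have hX : ∑ p ∈ E with p.1 ∈ X, g p.1 p.2
      = ∑ p ∈ E with p.1 ∈ X ∧ p.2 ∈ Z, g p.1 p.2
        + ∑ p ∈ E with p.2 ∉ Z, g p.1 p.2 := by
    rw [← sum_filter_add_sum_filter_not (E.filter (·.1 ∈ X)) (·.2 ∈ Z), filter_filter,
      filter_filter]
    congr 2
    ext p
    simp only [mem_filter]
    exact ⟨fun h => ⟨h.1, h.2.2⟩, fun h => ⟨h.1, hcut p.1 p.2 h.1 h.2, h.2⟩⟩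
  rw [sum_inflow_eq, sum_outflow_eq, hX, flowValue,
    ← sum_filter_add_sum_filter_not E (·.2 ∈ Z)]
  ring

theorem isMaxFlow_of_tight_cut (hf : Feasible E v e f) (Z : Finset A) (X : Finset S)
    (hcut : ∀ i j, (i, j) ∈ E → j ∉ Z → i ∈ X)
    (hsat : ∀ j ∈ Z, inflow E f j = e j) (hout : ∀ i ∈ X, outflow E f i = v i)
    (hzero : ∀ i ∈ X, ∀ j ∈ Z, f i j = 0) :
    IsMaxFlow E v e f := by
  refine ⟨hf, fun g hg => ?_⟩
  have hg_nonneg : 0 ≤ ∑ p ∈ E with p.1 ∈ X ∧ p.2 ∈ Z, g p.1 p.2 :=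
    sum_nonneg fun p hp => hg.1 p.1 p.2 (mem_filter.1 hp).1
  have hf_zero : ∑ p ∈ E with p.1 ∈ X ∧ p.2 ∈ Z, f p.1 p.2 = 0 :=
    sum_eq_zero fun p hp => hzero p.1 (mem_filter.1 hp).2.1 p.2 (mem_filter.1 hp).2.2
  rw [flowValue_eq_of_cut hcut, flowValue_eq_of_cut hcut, hf_zero, sum_congr rfl hsat,
    sum_congr rfl hout]
  have := sum_le_sum fun j (_ : j ∈ Z) => hg.inflow_le j
  have := sum_le_sum fun i (_ : i ∈ X) => hg.outflow_le i
  linarith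

theorem riskRatio_eq (E : Finset (S × A)) (e : A → ℝ) (f : S → A → ℝ) (j : A) :
    riskRatio E e f j = (e j - inflow E f j) / e j :=
  rfl

theorem riskRatio_nonneg {j : A} (he : 0 < e j) (hf : Feasible E v e f) :
    0 ≤ riskRatio E e f j :=
  div_nonneg (sub_nonneg.2 (hf.inflow_le j)) he.le

theorem riskRatio_pos_iff {j : A} (he : 0 < e j) :
    0 < riskRatio E e f j ↔ inflow E f j < e j := by
  rw [riskRatio_eq, div_pos_iff_of_pos_right he, sub_pos]

theorem objective_add_smul_sub (he : ∀ j, e j ≠ 0) (f g : S → A → ℝ) (t : ℝ) :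
    objective E e (f + t • (g - f)) = objective E e f
      - 2 * t * ∑ j, riskRatio E e f j * (inflow E g j - inflow E f j)
      + t ^ 2 * ∑ j, (inflow E g j - inflow E f j) ^ 2 / e j := by
  simp only [objective, riskRatio_eq, inflow_add, inflow_smul, inflow_sub, mul_sum,
    ← sum_sub_distrib, ← sum_add_distrib]
  refine sum_congr rfl fun j _ => ?_
  field_simp [he j]
  ring

theorem MWSR.sum_riskRatio_mul_inflow_sub_nonpos (he : ∀ j, 0 < e j) (hf : MWSR E v e f)
    {g : S → A → ℝ} (hg : Feasible E v e g) :
    ∑ j, riskRatio E e f j * (inflow E g j - inflow E f j) ≤ 0 := by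
  refine nonpos_of_forall_two_mul_mul_le_sq_mul
    (Q := ∑ j, (inflow E g j - inflow E f j) ^ 2 / e j)
    (sum_nonneg fun j _ => div_nonneg (sq_nonneg _) (he j).le) fun t ht => ?_
  have hmem := (convex_setOf_feasible E v e).add_smul_sub_mem hf.1 hg
    (Set.Ioc_subset_Icc_self ht)
  have := hf.2 _ hmem
  rw [objective_add_smul_sub fun j => (he j).ne'] at this
  linarith

theorem MWSR.riskRatio_nonpos_of_outflow_lt (he : ∀ j, 0 < e j) (hf : MWSR E v e f)
    {i : S} {l : A} (hil : (i, l) ∈ E) (hi : outflow E f i < v i) :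
    riskRatio E e f l ≤ 0 := by
  by_contra! hr
  have hl : inflow E f l < e l := (riskRatio_pos_iff (he l)).1 hr
  set δ := min (v i - outflow E f i) (e l - inflow E f l)
  have hδ : 0 < δ := lt_min (sub_pos.2 hi) (sub_pos.2 hl)
  have hg := hf.1.add_edgeFlow hil (δ := δ) (by linarith [hf.1.1 i l hil])
    (by linarith [min_le_left (v i - outflow E f i) (e l - inflow E f l)])
    (by linarith [min_le_right (v i - outflow E f i) (e l - inflow E f l)])
  have := hf.sum_riskRatio_mul_inflow_sub_nonpos he hg
  simp only [inflow_add, inflow_edgeFlow hil, add_sub_cancel_left, mul_ite, mul_zero,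
    sum_ite_eq', mem_univ, if_true] at this
  nlinarith

theorem MWSR.ratioConstraint (he : ∀ j, 0 < e j) (hf : MWSR E v e f) :
    RatioConstraint E e f := by
  intro i j l hij hpos hil
  by_contra! hr
  have hl : inflow E f l < e l :=
    (riskRatio_pos_iff (he l)).1 ((riskRatio_nonneg (he j) hf.1).trans_lt hr)
  set δ := min (f i j) (e l - inflow E f l)
  have hδ : 0 < δ := lt_min hpos (sub_pos.2 hl)
  have hδf : δ ≤ f i j := min_le_left _ _
  have hδl : δ ≤ e l - inflow E f l := min_le_right _ _
  have hg₁ := hf.1.add_edgeFlow hij (δ := -δ) (neg_le_neg hδf)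
    (by linarith [hf.1.outflow_le i]) (by linarith [hf.1.inflow_le j])
  have hg₂ := hg₁.add_edgeFlow hil (δ := δ) (by linarith [hg₁.1 i l hil])
    (by rw [outflow_add, outflow_edgeFlow hij, if_pos rfl]; linarith [hf.1.outflow_le i])
    (by rw [inflow_add, inflow_edgeFlow hij]; split_ifs <;> linarith)
  have := hf.sum_riskRatio_mul_inflow_sub_nonpos he hg₂
  simp only [inflow_add, inflow_edgeFlow hij, inflow_edgeFlow hil, add_assoc,
    add_sub_cancel_left, mul_add, mul_ite, mul_zero, sum_add_distrib, sum_ite_eq', mem_univ,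
    if_true] at this
  nlinarith

theorem MWSR.isMaxFlow (he : ∀ j, 0 < e j) (hf : MWSR E v e f) : IsMaxFlow E v e f := by
  refine isMaxFlow_of_tight_cut hf.1 {j | riskRatio E e f j ≤ 0}
    {i | ∃ l, (i, l) ∈ E ∧ 0 < riskRatio E e f l} ?_ ?_ ?_ ?_
  · intro i j hij hj
    simp only [mem_filter, mem_univ, true_and, not_le] at hj ⊢
    exact ⟨j, hij, hj⟩
  · intro j hj
    simp only [mem_filter, mem_univ, true_and] at hj
    exact le_antisymm (hf.1.inflow_le j)
      (not_lt.1 fun h => hj.not_gt ((riskRatio_pos_iff (he j)).2 h))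
  · intro i hi
    obtain ⟨l, hil, hl⟩ := (mem_filter.1 hi).2
    exact le_antisymm (hf.1.outflow_le i)
      (not_lt.1 fun h => (hf.riskRatio_nonpos_of_outflow_lt he hil h).not_gt hl)
  · intro i hi j hj
    obtain ⟨l, hil, hl⟩ := (mem_filter.1 hi).2
    by_cases hij : (i, j) ∈ E
    · refine le_antisymm (not_lt.1 fun hpos => ?_) (hf.1.1 i j hij)
      exact ((hf.ratioConstraint he i j l hij hpos hil).trans (mem_filter.1 hj).2).not_gt hl
    · exact hf.1.2.1 i j hij

theorem mwsr_ratioBalanced_general (E : Finset (S × A)) (v : S → ℝ) (e : A → ℝ)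
    (he : ∀ j, 0 < e j)
    (f : S → A → ℝ) (hf : MWSR E v e f) :
    RatioBalanced E v e f :=
  ⟨hf.isMaxFlow he, hf.ratioConstraint he⟩

/-- Every MWSR flow is a ratio-balanced maximum flow. -/
theorem mwsr_ratioBalanced (E : Finset (S × A)) (v : S → ℝ) (e : A → ℝ)
    (hv : ∀ i, 0 ≤ v i) (he : ∀ j, 0 < e j)
    (f : S → A → ℝ) (hf : MWSR E v e f) :
    RatioBalanced E v e f :=
  mwsr_ratioBalanced_general E v e he f hf
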